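/- For every F ∈ L²([−π, π]) and f(z) = (1/2π) ∫_{−π}^{π} F(t) e^{−izt} dt, one has lim_{|y| → ∞} sup_{x ∈ ℝ} |f(x + iy)| / √((e^{2πy} − e^{−2πy})/(4πy)) = 0; that is, the decay of |f(z)|/√(K(z, z̄)) as |Im z| → ∞ is uniform in Re z. -/

import Mathlib

/-!
Since `|e^{-i(x+iy)t}| = e^{yt}`, every `|f(x + iy)|` is at most `(1/2π) ∫ |F(t)| e^{yt} dt`,
uniformly in `x`. Split `[-π, π]` at `|t| = a < π`. On `|t| ≤ a` the integral is at most
`e^{a|y|} ‖F‖₁`, which is `o(√K)` because `K(y) ≥ e^{2π|y|}/(8π|y|)`. On `a < |t| ≤ π`,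
Cauchy–Schwarz together with `∫_{-π}^{π} e^{2yt} dt = 2π K(y)` bounds it by
`‖F‖_{L²(a<|t|≤π)} √(2π K(y))`, and the first factor is small once `a` is close to `π`.
-/

open MeasureTheory

/-- The Paley–Wiener transform `f(z) = (1/2π) ∫_{−π}^{π} F(t) e^{−izt} dt`. -/
noncomputable def pwTransform (F : ℝ → ℂ) (z : ℂ) : ℂ :=
  (1 / (2 * Real.pi) : ℝ) •
    ∫ t in Set.Icc (-Real.pi) Real.pi, F t * Complex.exp (-Complex.I * z * t)

/-- The diagonal of the Paley–Wiener reproducing kernel: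
`K(z, z̄) = (e^{2πy} − e^{−2πy})/(4πy)` for `z = x + iy`, interpreted as `1` when `y = 0`. -/
noncomputable def pwKernelDiag (y : ℝ) : ℝ :=
  if y = 0 then 1
  else (Real.exp (2 * Real.pi * y) - Real.exp (-(2 * Real.pi * y))) / (4 * Real.pi * y)

open Real Set Filter Topology

lemma pwKernelDiag_pos (y : ℝ) : 0 < pwKernelDiag y := by
  unfold pwKernelDiag
  split_ifs with hy
  · exact one_pos
  rcases lt_or_gt_of_ne hy with hy | hy
  · exact div_pos_of_neg_of_neg (sub_neg.2 (exp_lt_exp.2 (by nlinarith [pi_pos])))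
      (by nlinarith [pi_pos])
  · exact div_pos (sub_pos.2 (exp_lt_exp.2 (by nlinarith [pi_pos]))) (by positivity)

lemma pwKernelDiag_neg (y : ℝ) : pwKernelDiag (-y) = pwKernelDiag y := by
  unfold pwKernelDiag
  rcases eq_or_ne y 0 with rfl | hy
  · simp
  rw [if_neg (neg_ne_zero.2 hy), if_neg hy, mul_neg, mul_neg, neg_neg, div_neg, ← neg_div,
    neg_sub]

lemma pwKernelDiag_abs (y : ℝ) : pwKernelDiag |y| = pwKernelDiag y := by
  rcases abs_choice y with h | h <;> simp only [h, pwKernelDiag_neg]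

lemma integral_exp_mul_sq_eq_pwKernelDiag (y : ℝ) :
    ∫ t in Icc (-π) π, exp (y * t) ^ 2 = 2 * π * pwKernelDiag y := by
  rw [integral_Icc_eq_integral_Ioc, ← intervalIntegral.integral_of_le (by linarith [pi_pos])]
  simp_rw [← exp_nat_mul, Nat.cast_ofNat, ← mul_assoc]
  unfold pwKernelDiag
  split_ifs with hy
  · simp [hy, two_mul]
  rw [intervalIntegral.integral_comp_mul_left exp (by simpa using hy), integral_exp, smul_eq_mul]
  field_simp
  ring

lemma exp_div_le_pwKernelDiag {u : ℝ} (hu : 1 ≤ u) :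
    exp (2 * π * u) / (8 * π * u) ≤ pwKernelDiag u := by
  have hu0 : 0 < u := one_pos.trans_le hu
  rw [pwKernelDiag, if_neg hu0.ne']
  -- `e^{-2πu} ≤ e^{2πu}/2` because `e^{4πu} ≥ 1 + 4πu ≥ 2`
  have hsmall : 2 * exp (-(2 * π * u)) ≤ exp (2 * π * u) := by
    have h2 : 2 ≤ exp (2 * π * u + 2 * π * u) := by
      nlinarith [add_one_le_exp (2 * π * u + 2 * π * u), pi_gt_three]
    rw [← sub_neg_eq_add, exp_sub, le_div_iff₀ (exp_pos _)] at h2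
    exact h2
  rw [div_le_div_iff₀ (by positivity) (by positivity)]
  nlinarith [mul_le_mul_of_nonneg_left hsmall (by positivity : 0 ≤ 4 * π * u)]

lemma tendsto_exp_mul_div_sqrt_pwKernelDiag_atTop {a : ℝ} (ha : a < π) :
    Tendsto (fun u => exp (a * u) / √(pwKernelDiag u)) atTop (𝓝 0) := by
  have hsq : Tendsto (fun u => exp (2 * a * u) / pwKernelDiag u) atTop (𝓝 0) := by
    have hlim := (tendsto_rpow_mul_exp_neg_mul_atTop_nhds_zero 1 (2 * (π - a))
      (by linarith)).const_mul (8 * π)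
    rw [mul_zero] at hlim
    refine squeeze_zero' (Eventually.of_forall fun u => by positivity [pwKernelDiag_pos u])
      ?_ hlim
    filter_upwards [eventually_ge_atTop 1] with u hu
    calc exp (2 * a * u) / pwKernelDiag u
        ≤ exp (2 * a * u) / (exp (2 * π * u) / (8 * π * u)) :=
          div_le_div_of_nonneg_left (exp_nonneg _) (by positivity) (exp_div_le_pwKernelDiag hu)
      _ = 8 * π * (u ^ (1 : ℝ) * exp (-(2 * (π - a)) * u)) := by
          have hexp : exp (2 * a * u) = exp (2 * π * u) * exp (-(2 * (π - a)) * u) := by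
            rw [← exp_add]; ring_nf
          rw [rpow_one, hexp]
          field_simp
  convert hsq.sqrt using 2 with u
  · rw [sqrt_div' _ (pwKernelDiag_pos u).le, show 2 * a * u = a * u + a * u by ring, exp_add,
      sqrt_mul_self (exp_nonneg _)]
  · simp

lemma tendsto_exp_mul_abs_div_sqrt_pwKernelDiag {a : ℝ} (ha : a < π) :
    Tendsto (fun y => exp (a * |y|) / √(pwKernelDiag y)) (comap abs atTop) (𝓝 0) := by
  simpa only [Function.comp_def, pwKernelDiag_abs] using
    (tendsto_exp_mul_div_sqrt_pwKernelDiag_atTop ha).comp (tendsto_comap (f := abs))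

lemma integral_mul_le_sqrt_mul_sqrt {α : Type*} [MeasurableSpace α] {μ : Measure α}
    {f g : α → ℝ} (hf : MemLp f 2 μ) (hg : MemLp g 2 μ) :
    ∫ a, f a * g a ∂μ ≤ √(∫ a, f a ^ 2 ∂μ) * √(∫ a, g a ^ 2 ∂μ) := by
  have holder := integral_mul_norm_le_Lp_mul_Lq Real.HolderConjugate.two_two
    (by simpa using hf) (by simpa using hg)
  simp only [norm_eq_abs, rpow_two, sq_abs, ← sqrt_eq_rpow] at holder
  calc ∫ a, f a * g a ∂μ ≤ ∫ a, |f a| * |g a| ∂μ := by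
        simpa only [abs_mul] using
          (le_abs_self _).trans (abs_integral_le_integral_abs (f := fun a => f a * g a))
    _ ≤ _ := holder

lemma norm_pwTransform_le (F : ℝ → ℂ) (x y : ℝ) :
    ‖pwTransform F (x + y * Complex.I)‖
      ≤ (2 * π)⁻¹ * ∫ t in Icc (-π) π, ‖F t‖ * exp (y * t) := by
  rw [pwTransform, norm_smul, norm_of_nonneg (by positivity), one_div]
  gcongr
  refine (norm_integral_le_integral_norm _).trans_eq (integral_congr_ae ?_)
  filter_upwards with t
  simp [Complex.norm_exp, Complex.mul_re]

lemma setIntegral_mul_exp_le {g : ℝ → ℝ} {a : ℝ} (hg0 : ∀ t, 0 ≤ g t)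
    (hg : IntegrableOn g (Icc (-a) a)) (y : ℝ) :
    ∫ t in Icc (-a) a, g t * exp (y * t) ≤ exp (a * |y|) * ∫ t in Icc (-a) a, g t := by
  rw [← integral_const_mul]
  refine integral_mono_of_nonneg (Eventually.of_forall fun t => by positivity [hg0 t])
    (hg.const_mul _) ?_
  filter_upwards [ae_restrict_mem measurableSet_Icc] with t ht
  rw [mul_comm (exp _)]
  refine mul_le_mul_of_nonneg_left (exp_le_exp.2 ?_) (hg0 t)
  calc y * t ≤ |y| * |t| := abs_mul y t ▸ le_abs_self _
    _ ≤ a * |y| := by rw [mul_comm]; gcongr; exact abs_le.2 ht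

lemma setIntegral_norm_mul_exp_le {F : ℝ → ℂ} (hF : MemLp F 2 (volume.restrict (Icc (-π) π)))
    {S : Set ℝ} (hS : S ⊆ Icc (-π) π) (y : ℝ) :
    ∫ t in S, ‖F t‖ * exp (y * t) ≤ √(∫ t in S, ‖F t‖ ^ 2) * √(2 * π * pwKernelDiag y) := by
  have hexp : Continuous fun t => exp (y * t) := by fun_prop
  have hexp_memLp : MemLp (fun t => exp (y * t)) 2 (volume.restrict (Icc (-π) π)) :=
    (memLp_two_iff_integrable_sq hexp.aestronglyMeasurable).2
      ((hexp.pow 2).integrableOn_Icc)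
  rw [← Measure.restrict_restrict_of_subset hS] at *
  refine (integral_mul_le_sqrt_mul_sqrt (hF.norm.restrict S) (hexp_memLp.restrict S)).trans ?_
  gcongr
  rw [← integral_exp_mul_sq_eq_pwKernelDiag, Measure.restrict_restrict_of_subset hS]
  exact setIntegral_mono_set (hexp.pow 2).integrableOn_Icc
    (Eventually.of_forall fun t => sq_nonneg _) (Eventually.of_forall hS)

lemma iSup_norm_pwTransform_div_sqrt_le {F : ℝ → ℂ}
    (hF : MemLp F 2 (volume.restrict (Icc (-π) π))) {a : ℝ} (ha : a ≤ π) (y : ℝ) :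
    (⨆ x : ℝ, ‖pwTransform F (x + y * Complex.I)‖) / √(pwKernelDiag y)
      ≤ (∫ t in Icc (-a) a, ‖F t‖) / (2 * π) * (exp (a * |y|) / √(pwKernelDiag y))
        + √((∫ t in Icc (-π) π \ Icc (-a) a, ‖F t‖ ^ 2) / (2 * π)) := by
  have hsub : Icc (-a) a ⊆ Icc (-π) π := Icc_subset_Icc (neg_le_neg ha) ha
  have hnorm : IntegrableOn (fun t => ‖F t‖) (Icc (-π) π) := hF.norm.integrable one_le_two
  have hsplit := integral_inter_add_sdiff (measurableSet_Icc (a := -a) (b := a))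
    (hnorm.mul_continuousOn (by fun_prop : Continuous fun t => exp (y * t)).continuousOn
      isCompact_Icc)
  rw [inter_eq_right.2 hsub] at hsplit
  calc (⨆ x : ℝ, ‖pwTransform F (x + y * Complex.I)‖) / √(pwKernelDiag y)
      ≤ (2 * π)⁻¹ * (∫ t in Icc (-π) π, ‖F t‖ * exp (y * t)) / √(pwKernelDiag y) := by
        gcongr
        exact ciSup_le fun x => norm_pwTransform_le F x y
    _ ≤ (2 * π)⁻¹ * (exp (a * |y|) * (∫ t in Icc (-a) a, ‖F t‖)
          + √(∫ t in Icc (-π) π \ Icc (-a) a, ‖F t‖ ^ 2) * √(2 * π * pwKernelDiag y))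
          / √(pwKernelDiag y) := by
        rw [← hsplit]
        gcongr
        · exact setIntegral_mul_exp_le (fun t => norm_nonneg _) (hnorm.mono_set hsub) y
        · exact setIntegral_norm_mul_exp_le hF sdiff_subset y
    _ = _ := by
        have hK := sqrt_pos.2 (pwKernelDiag_pos y)
        rw [sqrt_div' _ (by positivity), sqrt_mul' _ (pwKernelDiag_pos y).le]
        have h2π : √(2 * π) * √(2 * π) = 2 * π := mul_self_sqrt (by positivity)
        field_simp
        linear_combination √(∫ t in Icc (-π) π \ Icc (-a) a, ‖F t‖ ^ 2) * √(pwKernelDiag y) * h2π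

lemma tendsto_setIntegral_Icc_sdiff_Icc {E : Type*} [NormedAddCommGroup E] [NormedSpace ℝ E]
    {f : ℝ → E} {c : ℝ} (hf : IntegrableOn f (Icc (-c) c)) :
    Tendsto (fun a => ∫ t in Icc (-c) c \ Icc (-a) a, f t) (𝓝 c) (𝓝 0) := by
  have hvol (a : ℝ) :
      volume (Icc (-c) c \ Icc (-a) a) ≤ ENNReal.ofReal (c - a) + ENNReal.ofReal (c - a) := by
    calc volume (Icc (-c) c \ Icc (-a) a) ≤ volume (Icc (-c) (-a) ∪ Icc a c) := by
          refine measure_mono fun t ⟨⟨h1, h2⟩, h3⟩ => ?_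
          rw [mem_Icc, not_and_or, not_le, not_le] at h3
          rcases h3 with h | h
          · exact Or.inl ⟨h1, h.le⟩
          · exact Or.inr ⟨h.le, h2⟩
      _ ≤ _ := (measure_union_le _ _).trans_eq
          (by rw [Real.volume_Icc, Real.volume_Icc, neg_sub_neg])
  have hlim :
      Tendsto (fun a => ENNReal.ofReal (c - a) + ENNReal.ofReal (c - a)) (𝓝 c) (𝓝 0) := by
    have h : Tendsto (fun a => ENNReal.ofReal (c - a)) (𝓝 c) (𝓝 0) := by
      simpa using ENNReal.tendsto_ofReal ((continuous_sub_left c).tendsto c)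
    simpa using h.add h
  have := hf.tendsto_setIntegral_nhds_zero (s := fun a => Icc (-c) c \ Icc (-a) a)
    (tendsto_of_tendsto_of_tendsto_of_le_of_le tendsto_const_nhds hlim (fun _ => zero_le)
      fun a => (Measure.restrict_le_self _).trans (hvol a))
  simpa only [Measure.restrict_restrict_of_subset sdiff_subset] using this

lemma tendsto_nhds_zero_of_forall_le_add {α : Type*} {l : Filter α} {B : α → ℝ}
    (hB : ∀ x, 0 ≤ B x) (h : ∀ ε > 0, ∃ u : α → ℝ, Tendsto u l (𝓝 0) ∧ ∀ x, B x ≤ u x + ε) :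
    Tendsto B l (𝓝 0) := by
  refine Metric.tendsto_nhds.2 fun ε hε => ?_
  obtain ⟨u, hu, hBu⟩ := h (ε / 2) (half_pos hε)
  filter_upwards [hu.eventually (gt_mem_nhds (half_pos hε))] with x hx
  rw [Real.dist_eq, sub_zero, abs_of_nonneg (hB x)]
  linarith [hBu x]

theorem stmt13 (F : ℝ → ℂ)
    (hF : MemLp F 2 (volume.restrict (Set.Icc (-Real.pi) Real.pi))) :
    Filter.Tendsto
      (fun y : ℝ =>
        (⨆ x : ℝ, ‖pwTransform F (x + y * Complex.I)‖) /
          Real.sqrt (pwKernelDiag y))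
      (Filter.comap (fun y : ℝ => |y|) Filter.atTop) (nhds 0) := by
  have htail : Tendsto (fun a => √((∫ t in Icc (-π) π \ Icc (-a) a, ‖F t‖ ^ 2) / (2 * π)))
      (𝓝[<] π) (𝓝 0) := by
    simpa using (((tendsto_setIntegral_Icc_sdiff_Icc hF.norm.integrable_sq).div_const
      (2 * π)).sqrt).mono_left nhdsWithin_le_nhds
  refine tendsto_nhds_zero_of_forall_le_add
    (fun y => div_nonneg (iSup_nonneg fun x => norm_nonneg _) (sqrt_nonneg _)) fun ε hε => ?_
  obtain ⟨a, hsmall, ha⟩ := ((htail.eventually (gt_mem_nhds hε)).and self_mem_nhdsWithin).exists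
  have hdecay := (tendsto_exp_mul_abs_div_sqrt_pwKernelDiag ha).const_mul
    ((∫ t in Icc (-a) a, ‖F t‖) / (2 * π))
  rw [mul_zero] at hdecay
  exact ⟨_, hdecay, fun y => (iSup_norm_pwTransform_div_sqrt_le hF ha.le y).trans (by gcongr)⟩
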